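/- With the same quintic polynomial p as determined by cell averages f_{i+ℓ} of p and h_{i+ℓ} of p' over three consecutive intervals (ℓ = -1, 0, 1), the derivative at the right interface satisfies p'(x_i + Δx/2) = (1/(4Δx))(f_{i-1} − 8 f_i + 7 f_{i+1}) + (1/12)(h_{i-1} − 2 h_i − 5 h_{i+1}). -/

import Mathlib

/-! Writing `p = ∑_{k ≤ 5} c_k X^k`, every cell average of `p` and of `p'` is, by the fundamental
theorem of calculus, an explicit polynomial in the `c_k`, `xi` and `Δx` divided by `Δx`; the claimed
interface formula then becomes a polynomial identity after clearing `Δx`. -/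

open intervalIntegral

namespace Polynomial

theorem integral_eval_eq_sum_range {p : ℝ[X]} {n : ℕ} (hp : p.natDegree < n) (a b : ℝ) :
    ∫ x in a..b, p.eval x =
      ∑ k ∈ Finset.range n, p.coeff k * ((b ^ (k + 1) - a ^ (k + 1)) / (k + 1)) := by
  simp_rw [eval_eq_sum_range' hp]
  rw [integral_finsetSum fun k _ => (continuous_pow k).intervalIntegrable a b |>.const_mul _]
  simp_rw [integral_const_mul, integral_pow]

theorem integral_eval_derivative (p : ℝ[X]) (a b : ℝ) :
    ∫ x in a..b, p.derivative.eval x = p.eval b - p.eval a :=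
  integral_deriv_eq_sub' _ (_root_.funext fun _ => p.deriv) (fun _ _ => p.differentiableAt)
    p.derivative.continuous.continuousOn

theorem eval_derivative_eq_sum_range {p : ℝ[X]} {n : ℕ} (hp : p.natDegree < n) (x : ℝ) :
    p.derivative.eval x = ∑ k ∈ Finset.range n, p.coeff k * k * x ^ (k - 1) := by
  rw [derivative_eval, sum_over_range' _ (fun _ => by simp) n hp]

end Polynomial

open Polynomial in
theorem stmt_3 (Δx xi fim1 fi fip1 him1 hi hip1 : ℝ) (hΔ : 0 < Δx)
    (p : Polynomial ℝ) (hdeg : p.natDegree ≤ 5)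
    (hf1 : (1 / Δx) * ∫ x in ((xi - Δx) - Δx / 2)..((xi - Δx) + Δx / 2), p.eval x = fim1)
    (hf2 : (1 / Δx) * ∫ x in (xi - Δx / 2)..(xi + Δx / 2), p.eval x = fi)
    (hf3 : (1 / Δx) * ∫ x in ((xi + Δx) - Δx / 2)..((xi + Δx) + Δx / 2), p.eval x = fip1)
    (hh1 : (1 / Δx) * ∫ x in ((xi - Δx) - Δx / 2)..((xi - Δx) + Δx / 2),
        (Polynomial.derivative p).eval x = him1)
    (hh2 : (1 / Δx) * ∫ x in (xi - Δx / 2)..(xi + Δx / 2),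
        (Polynomial.derivative p).eval x = hi)
    (hh3 : (1 / Δx) * ∫ x in ((xi + Δx) - Δx / 2)..((xi + Δx) + Δx / 2),
        (Polynomial.derivative p).eval x = hip1) :
    (Polynomial.derivative p).eval (xi + Δx / 2) =
      (1 / (4 * Δx)) * (fim1 - 8 * fi + 7 * fip1)
        + (1 / 12) * (him1 - 2 * hi - 5 * hip1) := by
  have hΔ0 : Δx ≠ 0 := hΔ.ne'
  have hp : p.natDegree < 6 := by omega
  rw [integral_eval_eq_sum_range hp] at hf1 hf2 hf3
  rw [integral_eval_derivative, eval_eq_sum_range' hp, eval_eq_sum_range' hp] at hh1 hh2 hh3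
  rw [eval_derivative_eq_sum_range hp]
  subst hf1 hf2 hf3 hh1 hh2 hh3
  simp only [Finset.sum_range_succ, Finset.sum_range_zero]
  field_simp
  ring
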